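/- Let G be a graph without isolated vertices and H a dilation of G with no additional vertices. Then γ(H) ≤ ν(H). -/

import Mathlib

open Finset

/-- Two vertices of a hypergraph (given by its finite set of hyperedges) are
adjacent if they are distinct and lie in a common hyperedge. -/
def HypAdj {W : Type*} (E : Finset (Finset W)) (u v : W) : Prop :=
  u ≠ v ∧ ∃ e ∈ E, u ∈ e ∧ v ∈ e

/-- A matching of a hypergraph: a set of pairwise disjoint hyperedges. -/
def IsHypMatching {W : Type*} (E M : Finset (Finset W)) : Prop :=
  M ⊆ E ∧ ∀ a ∈ M, ∀ b ∈ M, a ≠ b → Disjoint a b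

/-- Matching number of a hypergraph. -/
noncomputable def nuH {W : Type*} (E : Finset (Finset W)) : ℕ :=
  sSup {n | ∃ M : Finset (Finset W), IsHypMatching E M ∧ M.card = n}

/-- A transversal (vertex cover) of a hypergraph: meets every hyperedge. -/
def IsTransversal {W : Type*} (E : Finset (Finset W)) (T : Finset W) : Prop :=
  ∀ e ∈ E, ∃ w ∈ T, w ∈ e

/-- Transversal number of a hypergraph. -/
noncomputable def tauH {W : Type*} (E : Finset (Finset W)) : ℕ :=
  sInf {n | ∃ T : Finset W, IsTransversal E T ∧ T.card = n}

/-- A dominating set of a hypergraph: every vertex outside it is adjacent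
(shares a hyperedge) with some vertex inside it. -/
def IsDominatingH {W : Type*} (E : Finset (Finset W)) (D : Finset W) : Prop :=
  ∀ v, v ∉ D → ∃ u ∈ D, HypAdj E u v

/-- Domination number of a hypergraph on the (finite) vertex type `W`. -/
noncomputable def gammaH {W : Type*} (E : Finset (Finset W)) : ℕ :=
  sInf {n | ∃ D : Finset W, IsDominatingH E D ∧ D.card = n}

/-- The two-element finset associated to an unordered pair. -/
noncomputable def sym2ToFinset {V : Type*} (e : Sym2 V) : Finset V := by
  classical exact Sym2.lift ⟨fun a b => ({a, b} : Finset V), fun a b => Finset.pair_comm a b⟩ e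

/-- The edges of a simple graph, viewed as the hyperedges (of size two)
of a 2-uniform hypergraph. -/
noncomputable def graphEdges {V : Type*} [Fintype V] (G : SimpleGraph V) :
    Finset (Finset V) := by
  classical exact ((Finset.univ : Finset (Sym2 V)).filter (· ∈ G.edgeSet)).image sym2ToFinset

/-- A dominating set of a simple graph. -/
def IsDominatingG {V : Type*} (G : SimpleGraph V) (D : Finset V) : Prop :=
  ∀ v, v ∉ D → ∃ u ∈ D, G.Adj u v

/-- Domination number of a simple graph. -/
noncomputable def gammaG {V : Type*} [Fintype V] (G : SimpleGraph V) : ℕ :=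
  sInf {n | ∃ D : Finset V, IsDominatingG G D ∧ D.card = n}

/-- A Berge-`G` hypergraph on vertex type `W`: an injection `i` of the vertices
of `G` and a bijection `f` from the edges of `G` to the hyperedges `EH`,
such that each edge of `G` is embedded in the corresponding hyperedge. -/
structure BergeG {V : Type*} (G : SimpleGraph V) (W : Type*) where
  EH : Finset (Finset W)
  i : V ↪ W
  f : Sym2 V → Finset W
  f_mem : ∀ ⦃e⦄, e ∈ G.edgeSet → f e ∈ EH
  f_inj : ∀ ⦃e e'⦄, e ∈ G.edgeSet → e' ∈ G.edgeSet → f e = f e' → e = e'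
  f_surj : ∀ h ∈ EH, ∃ e ∈ G.edgeSet, f e = h
  contains : ∀ ⦃u v⦄, G.Adj u v → i u ∈ f s(u, v) ∧ i v ∈ f s(u, v)

/-- A dilation of a simple graph `G`, on the vertex type `W`: each vertex `v` of `G`
is blown up to a finset `vset v` containing the support vertex `supp v`, each edge `e`
of `G` gets a (possibly empty) finset `eset e` of additional vertices, all these finsets
being pairwise disjoint and covering `W`; the hyperedge corresponding to the edge
`e = {u,v}` is `vset u ∪ vset v ∪ eset e`, and all hyperedges have size at most the
rank `k ≥ 3`. -/
structure GraphDilation {V : Type*} (G : SimpleGraph V) (W : Type*) where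
  vset : V → Finset W
  supp : V → W
  eset : Sym2 V → Finset W
  k : ℕ
  k_ge : 3 ≤ k
  supp_mem : ∀ v, supp v ∈ vset v
  vset_disj : ∀ ⦃u v : V⦄, u ≠ v → Disjoint (vset u) (vset v)
  eset_disj : ∀ ⦃e f : Sym2 V⦄, e ∈ G.edgeSet → f ∈ G.edgeSet → e ≠ f →
    Disjoint (eset e) (eset f)
  vset_eset_disj : ∀ (v : V), ∀ ⦃e : Sym2 V⦄, e ∈ G.edgeSet → Disjoint (vset v) (eset e)
  card_le : ∀ ⦃u v : V⦄, G.Adj u v →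
    (vset u).card + (vset v).card + (eset s(u, v)).card ≤ k
  cover : ∀ w : W, (∃ v : V, w ∈ vset v) ∨ (∃ e ∈ G.edgeSet, w ∈ eset e)

/-- The hyperedge of a dilation corresponding to an edge `e` of the support graph. -/
noncomputable def GraphDilation.hedge {V W : Type*} {G : SimpleGraph V} (D : GraphDilation G W)
    (e : Sym2 V) : Finset W := by
  classical exact (sym2ToFinset e).biUnion D.vset ∪ D.eset e

/-- The hyperedge set of a dilation. -/
noncomputable def GraphDilation.edges {V W : Type*} [Fintype V] {G : SimpleGraph V}
    (D : GraphDilation G W) : Finset (Finset W) := by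
  classical exact ((Finset.univ : Finset (Sym2 V)).filter (· ∈ G.edgeSet)).image D.hedge

/-! Take a maximum matching `M` of `G`. In every edge of `M` choose an endpoint that has an
unmatched neighbour, if there is one; since `M` admits no augmenting path of length one or three,
these `|M|` endpoints dominate `G`. Without additional vertices every vertex of the dilation lies in
the blown-up set of a vertex of `G`, so the support vertices of a dominating set of `G` dominate
`H`, while the hyperedges of a matching of `G` are pairwise disjoint in `H`. Hence
`γ(H) ≤ γ(G) ≤ ν(G) ≤ ν(H)`. -/

lemma mem_sym2ToFinset {V : Type*} {x : V} {e : Sym2 V} : x ∈ sym2ToFinset e ↔ x ∈ e := by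
  classical
  induction e using Sym2.ind with
  | _ a b => simp [sym2ToFinset, Sym2.mem_iff]

section Matching

variable {V : Type*} {G : SimpleGraph V} {M : Finset (Sym2 V)} {a b x y : V}

def IsGraphMatching (G : SimpleGraph V) (M : Finset (Sym2 V)) : Prop :=
  (∀ e ∈ M, e ∈ G.edgeSet) ∧ ∀ e ∈ M, ∀ f ∈ M, e ≠ f → ∀ x ∈ e, x ∉ f

def IsMaximumGraphMatching (G : SimpleGraph V) (M : Finset (Sym2 V)) : Prop :=
  IsGraphMatching G M ∧ ∀ M', IsGraphMatching G M' → M'.card ≤ M.card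

def Unmatched (M : Finset (Sym2 V)) (v : V) : Prop :=
  ∀ e ∈ M, v ∉ e

lemma Unmatched.mono {M' : Finset (Sym2 V)} {v : V} (hv : Unmatched M v) (h : M' ⊆ M) :
    Unmatched M' v :=
  fun e he => hv e (h he)

lemma Unmatched.insert [DecidableEq V] {e : Sym2 V} {v : V} (hv : Unmatched M v) (he : v ∉ e) :
    Unmatched (insert e M) v := by
  simpa [Unmatched] using ⟨he, hv⟩

lemma Unmatched.notMem {e : Sym2 V} {v : V} (hv : Unmatched M v) (he : v ∈ e) : e ∉ M :=
  fun h => hv e h he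

lemma IsGraphMatching.erase [DecidableEq V] (hM : IsGraphMatching G M) (e : Sym2 V) :
    IsGraphMatching G (M.erase e) :=
  ⟨fun f hf => hM.1 f (mem_of_mem_erase hf),
    fun f hf g hg => hM.2 f (mem_of_mem_erase hf) g (mem_of_mem_erase hg)⟩

lemma IsGraphMatching.unmatched_erase [DecidableEq V] (hM : IsGraphMatching G M) {e : Sym2 V}
    (he : e ∈ M) {v : V} (hv : v ∈ e) : Unmatched (M.erase e) v :=
  fun f hf => hM.2 e he f (mem_of_mem_erase hf) (ne_of_mem_erase hf).symm v hv

lemma IsGraphMatching.insert [DecidableEq V] (hM : IsGraphMatching G M) (hab : G.Adj a b)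
    (ha : Unmatched M a) (hb : Unmatched M b) : IsGraphMatching G (insert s(a, b) M) := by
  have hnew : ∀ f ∈ M, ∀ x ∈ s(a, b), x ∉ f := by
    rintro f hf x hx
    rcases Sym2.mem_iff.mp hx with rfl | rfl
    exacts [ha f hf, hb f hf]
  refine ⟨?_, ?_⟩
  · simpa using ⟨hab, hM.1⟩
  · simp only [mem_insert]
    rintro e (rfl | he) f (rfl | hf) hef x hxe hxf
    exacts [hef rfl, hnew f hf x hxe hxf, hnew e he x hxf hxe, hM.2 e he f hf hef x hxe hxf]

lemma exists_isMaximumGraphMatching [Fintype V] (G : SimpleGraph V) :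
    ∃ M, IsMaximumGraphMatching G M := by
  classical
  obtain ⟨M, hM, hmax⟩ := (univ.filter (IsGraphMatching G)).exists_max_image card
    ⟨∅, by simp [IsGraphMatching]⟩
  exact ⟨M, (mem_filter.mp hM).2, fun M' hM' => hmax M' (by simpa using hM')⟩

namespace IsMaximumGraphMatching

lemma not_adj (hM : IsMaximumGraphMatching G M) (hx : Unmatched M x) (hy : Unmatched M y) :
    ¬ G.Adj x y := by
  classical
  intro hxy
  have := hM.2 _ (hM.1.insert hxy hx hy)
  rw [card_insert_of_notMem (hx.notMem (Sym2.mem_mk_left x y))] at this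
  omega

/-- There is no augmenting path `x - a = b - y` through an edge `ab` of `M`. -/
lemma eq_of_adj_of_adj (hM : IsMaximumGraphMatching G M) (hab : s(a, b) ∈ M)
    (hxa : G.Adj x a) (hby : G.Adj b y)
    (hx : Unmatched M x) (hy : Unmatched M y) : x = y := by
  classical
  by_contra hxy
  have hmatched : ∀ {v}, Unmatched M v → v ≠ a ∧ v ≠ b := fun hv =>
    ⟨fun h => hv _ hab (h ▸ Sym2.mem_mk_left a b),
      fun h => hv _ hab (h ▸ Sym2.mem_mk_right a b)⟩
  set M₀ := M.erase s(a, b)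
  have hM₁ : IsGraphMatching G (insert s(b, y) M₀) :=
    (hM.1.erase _).insert hby (hM.1.unmatched_erase hab (Sym2.mem_mk_right a b))
      (hy.mono (erase_subset _ _))
  have hx₁ : Unmatched (insert s(b, y) M₀) x :=
    (hx.mono (erase_subset _ _)).insert (by simp [Sym2.mem_iff, (hmatched hx).2, hxy])
  have ha₁ : Unmatched (insert s(b, y) M₀) a :=
    (hM.1.unmatched_erase hab (Sym2.mem_mk_left a b)).insert
      (by simp [Sym2.mem_iff, (G.mem_edgeSet.mp (hM.1.1 _ hab)).ne, (hmatched hy).1.symm])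
  have := hM.2 _ (hM₁.insert hxa hx₁ ha₁)
  rw [card_insert_of_notMem (hx₁.notMem (Sym2.mem_mk_left x a)),
    card_insert_of_notMem ((hy.mono (erase_subset _ _)).notMem (Sym2.mem_mk_right b y)),
    card_erase_of_mem hab] at this
  have := card_pos.mpr ⟨_, hab⟩
  omega

lemma exists_isDominatingG_card_le (hM : IsMaximumGraphMatching G M)
    (hiso : ∀ v : V, ∃ u : V, G.Adj v u) :
    ∃ S : Finset V, IsDominatingG G S ∧ S.card ≤ M.card := by
  classical
  let P : V → Prop := fun a => ∃ u, Unmatched M u ∧ G.Adj a u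
  have hchoice : ∀ e : Sym2 V, ∃ a ∈ e, ∀ b ∈ e, P b → P a := by
    intro e
    induction e using Sym2.ind with
    | _ a b =>
      by_cases hb : P b
      · exact ⟨b, Sym2.mem_mk_right a b, fun _ _ _ => hb⟩
      · refine ⟨a, Sym2.mem_mk_left a b, fun c hc hPc => ?_⟩
        rcases Sym2.mem_iff.mp hc with rfl | rfl
        exacts [hPc, absurd hPc hb]
  choose c hc_mem hc_spec using hchoice
  refine ⟨M.image c, fun v hv => ?_, card_image_le⟩
  by_cases hvM : Unmatched M v
  · obtain ⟨u, hvu⟩ := hiso v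
    obtain ⟨e, he, hue⟩ : ∃ e ∈ M, u ∈ e := by
      by_contra! hu
      exact hM.not_adj hvM hu hvu
    refine ⟨c e, mem_image_of_mem c he, ?_⟩
    by_cases hcu : c e = u
    · exact hcu ▸ hvu.symm
    obtain ⟨u', hu', hcu'⟩ := hc_spec e u hue ⟨v, hvM, hvu.symm⟩
    rw [(Sym2.mem_and_mem_iff hcu).mp ⟨hc_mem e, hue⟩] at he
    exact hM.eq_of_adj_of_adj he hcu'.symm hvu.symm hu' hvM ▸ hcu'
  · obtain ⟨e, he, hve⟩ : ∃ e ∈ M, v ∈ e := by simpa [Unmatched] using hvM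
    have hce : c e ≠ v := fun h => hv (h ▸ mem_image_of_mem c he)
    exact ⟨c e, mem_image_of_mem c he,
      G.adj_of_mem_incidenceSet hce ⟨hM.1.1 e he, hc_mem e⟩ ⟨hM.1.1 e he, hve⟩⟩

end IsMaximumGraphMatching

end Matching

lemma IsHypMatching.card_le_nuH {W : Type*} {E M : Finset (Finset W)} (hM : IsHypMatching E M) :
    M.card ≤ nuH E :=
  le_csSup ⟨E.card, by rintro _ ⟨N, hN, rfl⟩; exact card_le_card hN.1⟩ ⟨M, hM, rfl⟩

lemma IsDominatingH.gammaH_le_card {W : Type*} {E : Finset (Finset W)} {S : Finset W}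
    (hS : IsDominatingH E S) : gammaH E ≤ S.card :=
  Nat.sInf_le ⟨S, hS, rfl⟩

namespace GraphDilation

variable {V W : Type*} {G : SimpleGraph V} (D : GraphDilation G W)

lemma mem_hedge {e : Sym2 V} {w : W} :
    w ∈ D.hedge e ↔ (∃ x ∈ e, w ∈ D.vset x) ∨ w ∈ D.eset e := by
  classical
  simp [hedge, mem_sym2ToFinset]

lemma supp_mem_hedge {e : Sym2 V} {x : V} (hx : x ∈ e) : D.supp x ∈ D.hedge e :=
  D.mem_hedge.mpr (Or.inl ⟨x, hx, D.supp_mem x⟩)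

lemma hedge_mem_edges [Fintype V] {e : Sym2 V} (he : e ∈ G.edgeSet) : D.hedge e ∈ D.edges := by
  classical
  simpa [edges] using ⟨e, he, rfl⟩

lemma disjoint_hedge {e f : Sym2 V} (he : e ∈ G.edgeSet) (hf : f ∈ G.edgeSet)
    (hef : ∀ x ∈ e, x ∉ f) : Disjoint (D.hedge e) (D.hedge f) := by
  have hne : e ≠ f := fun h => hef _ e.out_fst_mem (h ▸ e.out_fst_mem)
  rw [disjoint_left]
  intro w hwe hwf
  rcases D.mem_hedge.mp hwe with ⟨x, hx, hwx⟩ | hwe <;>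
    rcases D.mem_hedge.mp hwf with ⟨y, hy, hwy⟩ | hwf
  · exact disjoint_left.mp (D.vset_disj fun h : x = y => hef x hx (h ▸ hy)) hwx hwy
  · exact disjoint_left.mp (D.vset_eset_disj x hf) hwx hwf
  · exact disjoint_left.mp (D.vset_eset_disj y he) hwy hwe
  · exact disjoint_left.mp (D.eset_disj he hf hne) hwe hwf

lemma card_le_nuH [Fintype V] {M : Finset (Sym2 V)} (hM : IsGraphMatching G M) :
    M.card ≤ nuH D.edges := by
  classical
  have hdisj : ∀ e ∈ M, ∀ f ∈ M, e ≠ f → Disjoint (D.hedge e) (D.hedge f) :=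
    fun e he f hf hef => D.disjoint_hedge (hM.1 e he) (hM.1 f hf) (hM.2 e he f hf hef)
  have hinj : Set.InjOn D.hedge M := by
    intro e he f hf hef
    by_contra hne
    exact disjoint_left.mp (hdisj e he f hf hne) (D.supp_mem_hedge e.out_fst_mem)
      (hef ▸ D.supp_mem_hedge e.out_fst_mem)
  rw [← card_image_of_injOn hinj]
  refine IsHypMatching.card_le_nuH ⟨?_, ?_⟩
  · rintro _ h
    obtain ⟨e, he, rfl⟩ := mem_image.mp h
    exact D.hedge_mem_edges (hM.1 e he)
  · simp only [mem_image]
    rintro _ ⟨e, he, rfl⟩ _ ⟨f, hf, rfl⟩ hef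
    exact hdisj e he f hf fun h => hef (congrArg D.hedge h)

lemma isDominatingH_image_supp [Fintype V] [DecidableEq W] (hiso : ∀ v : V, ∃ u : V, G.Adj v u)
    (hno : ∀ e ∈ G.edgeSet, D.eset e = ∅) {S : Finset V} (hS : IsDominatingG G S) :
    IsDominatingH D.edges (S.image D.supp) := by
  intro w hw
  obtain ⟨v, hwv⟩ : ∃ v, w ∈ D.vset v := by
    rcases D.cover w with h | ⟨e, he, hwe⟩
    · exact h
    · simp [hno e he] at hwe
  obtain ⟨u, huS, e, he, hue, hve⟩ : ∃ u ∈ S, ∃ e ∈ G.edgeSet, u ∈ e ∧ v ∈ e := by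
    by_cases hvS : v ∈ S
    · obtain ⟨t, hvt⟩ := hiso v
      exact ⟨v, hvS, s(v, t), hvt, Sym2.mem_mk_left v t, Sym2.mem_mk_left v t⟩
    · obtain ⟨u, huS, huv⟩ := hS v hvS
      exact ⟨u, huS, s(u, v), huv, Sym2.mem_mk_left u v, Sym2.mem_mk_right u v⟩
  have hsuS : D.supp u ∈ S.image D.supp := mem_image_of_mem _ huS
  exact ⟨D.supp u, hsuS, fun h => hw (h ▸ hsuS), D.hedge e, D.hedge_mem_edges he,
    D.supp_mem_hedge hue, D.mem_hedge.mpr (Or.inl ⟨v, hve, hwv⟩)⟩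

end GraphDilation

theorem dilation_gamma_le_nu {V W : Type*} [Fintype V] (G : SimpleGraph V)
    (hiso : ∀ v : V, ∃ u : V, G.Adj v u)
    (D : GraphDilation G W) (hno : ∀ e ∈ G.edgeSet, D.eset e = ∅) :
    gammaH D.edges ≤ nuH D.edges := by
  classical
  obtain ⟨M, hM⟩ := exists_isMaximumGraphMatching G
  obtain ⟨S, hS, hSM⟩ := hM.exists_isDominatingG_card_le hiso
  calc gammaH D.edges ≤ (S.image D.supp).card :=
        (D.isDominatingH_image_supp hiso hno hS).gammaH_le_card
    _ ≤ S.card := card_image_le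
    _ ≤ M.card := hSM
    _ ≤ nuH D.edges := D.card_le_nuH hM.1
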